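/- arXiv:2408.13387 — 2 statements merged into one kernel-verified Lean document; each statement's English description precedes it below -/
import Mathlib

section
/- Let Sig be a relation on a finite set Sys that contains a directed cycle on systems s₁, ..., sₙ (n ≥ 2, pairwise distinct), i.e., (sᵢ, sᵢ₊₁) ∈ Sig for all i and (sₙ, s₁) ∈ Sig. Then for every directed graph G and every embedding E : Sys → Nodes(G) that is injective on {s₁, ..., sₙ} and with respect to which Sig is compatible with G, the graph G contains a directed cycle. Consequently, a cyclic signalling structure cannot be compatibly embedded with injective (localised) system assignments into any acyclic graph. -/
/-- If the signalling relation `Sig` on a finite set of systems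
contains a directed cycle on `n ≥ 2` pairwise distinct systems, then for every
directed graph `(V, edge)` and every embedding `E` that is injective on the
cycle and with respect to which `Sig` is compatible with the graph, the graph
contains a directed cycle. -/
theorem cyclic_signalling_forces_graph_cycle
    {Sys : Type*} [Fintype Sys] (Sig : Sys → Sys → Prop)
    (n : ℕ) (hn : 2 ≤ n) (s : ℕ → Sys)
    (hdist : ∀ i j, i < n → j < n → s i = s j → i = j)
    (hcyc : ∀ i, i + 1 < n → Sig (s i) (s (i + 1)))
    (hlast : Sig (s (n - 1)) (s 0))
    {V : Type*} (edge : V → V → Prop) (E : Sys → V)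
    (hinj : ∀ i j, i < n → j < n → E (s i) = E (s j) → i = j)
    (hcompat : ∀ a b, Sig a b → Relation.TransGen edge (E a) (E b)) :
    ∃ v, Relation.TransGen edge v v := by
  have key : ∀ k, k < n → Relation.TransGen edge (E (s 0)) (E (s k)) ∨ k = 0 := by
    intro k hk
    induction k with
    | zero => exact Or.inr rfl
    | succ m ih =>
      left
      have hm : m < n := Nat.lt_of_succ_lt hk
      have step : Relation.TransGen edge (E (s m)) (E (s (m + 1))) :=
        hcompat _ _ (hcyc m hk)
      rcases ih hm with h | h
      · exact h.trans step
      · subst h; exact step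
  rcases key (n - 1) (Nat.sub_lt (Nat.lt_of_lt_of_le Nat.zero_lt_two hn) Nat.one_pos) with h | h
  · exact ⟨E (s 0), h.trans (hcompat _ _ hlast)⟩
  · omega
end

section
/- Let M : L(H_{S'} ⊗ H_R) → L(H_S ⊗ H_Q) be a completely positive linear map between operator spaces over finite-dimensional Hilbert spaces, with H_S ≅ H_{S'}. Then the loop composition M^{S↪S'} : L(H_R) → L(H_Q), defined by M^{S↪S'}(ρ) := Σ_{i,j} ⟨i|_S M(ρ ⊗ |i⟩⟨j|_{S'}) |j⟩_S, is also completely positive. -/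
/-!
Write `|Ω⟩ = Σᵢ |i⟩_{S'} ⊗ |i⟩_{S''}` with an ancilla `S'' ≅ S`. Then
`M^{S↪S'}(ρ) = ⟨Ω| (M ⊗ id_{S''})(|Ω⟩⟨Ω| ⊗ ρ) |Ω⟩`, and the same identity holds after tensoring
with `id_{ℂⁿ}`, the ancilla becoming `S'' ⊗ ℂⁿ`. Conjugation by `|Ω⟩ ⊗ 1` preserves positivity,
and so does `M ⊗ id_{S'' ⊗ ℂⁿ}` by complete positivity of `M`.
-/

open Kronecker
open scoped ComplexOrder

/-- The extension `Φ ⊗ id_{L(ℂⁿ)}` of a map `Φ : L(H_α) → L(H_β)` (valid for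
linear `Φ`), acting entrywise on the `ℂⁿ` indices. -/
noncomputable def cpExt {α β : Type*} [Fintype α] [Fintype β]
    (Φ : Matrix α α ℂ → Matrix β β ℂ) (n : ℕ)
    (X : Matrix (α × Fin n) (α × Fin n) ℂ) :
    Matrix (β × Fin n) (β × Fin n) ℂ :=
  Matrix.of fun p q =>
    Φ (Matrix.of fun a a' => X (a, p.2) (a', q.2)) p.1 q.1

/-- Complete positivity: `Φ ⊗ id_{L(ℂⁿ)}` maps positive semidefinite operators
to positive semidefinite operators, for every `n`. -/
def IsCompletelyPositive {α β : Type*} [Fintype α] [Fintype β]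
    (Φ : Matrix α α ℂ → Matrix β β ℂ) : Prop :=
  ∀ (n : ℕ) (X : Matrix (α × Fin n) (α × Fin n) ℂ),
    X.PosSemidef → (cpExt Φ n X).PosSemidef

/-- Loop composition `S ↪ S'` over the first tensor factor:
`M^{S↪S'}(ρ) := Σ_{i,j} ⟨i|_S M(|i⟩⟨j|_{S'} ⊗ ρ) |j⟩_S`. -/
noncomputable def loopComp {s r q : Type*}
    [Fintype s] [DecidableEq s] [Fintype r] [Fintype q]
    (M : Matrix (s × r) (s × r) ℂ → Matrix (s × q) (s × q) ℂ)
    (ρ : Matrix r r ℂ) : Matrix q q ℂ :=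
  Matrix.of fun k l =>
    ∑ i : s, ∑ j : s, M (Matrix.single i j (1 : ℂ) ⊗ₖ ρ) (i, k) (j, l)

open Matrix

section Extension

variable {α β ι : Type*} [Fintype α] [Fintype β] [Fintype ι]

noncomputable def extendBy (Φ : Matrix α α ℂ → Matrix β β ℂ) (ι : Type*)
    (X : Matrix (α × ι) (α × ι) ℂ) : Matrix (β × ι) (β × ι) ℂ :=
  of fun p q => Φ (of fun a a' => X (a, p.2) (a', q.2)) p.1 q.1

theorem IsCompletelyPositive.posSemidef_extendBy {Φ : Matrix α α ℂ → Matrix β β ℂ}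
    (hΦ : IsCompletelyPositive Φ) {X : Matrix (α × ι) (α × ι) ℂ} (hX : X.PosSemidef) :
    (extendBy Φ ι X).PosSemidef := by
  let e := Fintype.equivFin ι
  have hX' : (X.submatrix (Prod.map id e.symm) (Prod.map id e.symm)).PosSemidef :=
    hX.submatrix _
  have h_reindex : extendBy Φ ι X =
      (cpExt Φ _ (X.submatrix (Prod.map id e.symm) (Prod.map id e.symm))).submatrix
        (Prod.map id e) (Prod.map id e) := by
    ext p q
    simp [extendBy, cpExt]
  rw [h_reindex]
  exact (hΦ _ _ hX').submatrix _

end Extension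

section MaximallyEntangled

variable {s α ι : Type*} [DecidableEq s] [Fintype α] [DecidableEq α] [Fintype ι] [DecidableEq ι]

/-- The embedding `|Ω⟩ ⊗ 1 : H_α ⊗ ℂ^ι → (H_s ⊗ H_α) ⊗ (H_s ⊗ ℂ^ι)`, where
`|Ω⟩ = Σᵢ |i⟩ ⊗ |i⟩` is the unnormalised maximally entangled vector on the two copies of `H_s`. -/
def entangledEmbedding (s α ι : Type*) [DecidableEq s] [DecidableEq α] [DecidableEq ι] :
    Matrix ((s × α) × (s × ι)) (α × ι) ℂ :=
  of fun P b => if P.1.1 = P.2.1 ∧ b = (P.1.2, P.2.2) then 1 else 0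

theorem entangledEmbedding_mul_mul_conjTranspose_apply (X : Matrix (α × ι) (α × ι) ℂ)
    (i i' j j' : s) (b b' : α) (p p' : ι) :
    (entangledEmbedding s α ι * X * (entangledEmbedding s α ι)ᴴ)
        ((i', b), (i, p)) ((j', b'), (j, p')) =
      if i' = i ∧ j' = j then X (b, p) (b', p') else 0 := by
  simp [entangledEmbedding, mul_apply, conjTranspose_apply, ite_and, Finset.sum_ite_eq',
    mul_comm]
  split_ifs <;> simp

theorem conjTranspose_entangledEmbedding_mul_mul_apply [Fintype s]
    (Y : Matrix ((s × α) × (s × ι)) ((s × α) × (s × ι)) ℂ) (k l : α) (p p' : ι) :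
    ((entangledEmbedding s α ι)ᴴ * Y * entangledEmbedding s α ι) (k, p) (l, p') =
      ∑ i : s, ∑ j : s, Y ((i, k), (i, p)) ((j, l), (j, p')) := by
  simp [entangledEmbedding, mul_apply, conjTranspose_apply, Fintype.sum_prod_type, ite_and,
    Finset.sum_ite_eq, apply_ite (starRingEnd ℂ), ite_mul]
  exact Finset.sum_comm

end MaximallyEntangled

theorem extendBy_loopComp_eq {s r q ι : Type*} [Fintype s] [DecidableEq s] [Fintype r]
    [DecidableEq r] [Fintype q] [DecidableEq q] [Fintype ι] [DecidableEq ι]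
    (M : Matrix (s × r) (s × r) ℂ → Matrix (s × q) (s × q) ℂ)
    (X : Matrix (r × ι) (r × ι) ℂ) :
    extendBy (loopComp M) ι X =
      (entangledEmbedding s q ι)ᴴ *
        extendBy M (s × ι)
          (entangledEmbedding s r ι * X * (entangledEmbedding s r ι)ᴴ) *
        entangledEmbedding s q ι := by
  have h_block : ∀ (i j : s) (p p' : ι),
      (of fun a a' : s × r =>
        (entangledEmbedding s r ι * X * (entangledEmbedding s r ι)ᴴ) (a, (i, p)) (a', (j, p'))) =
        single i j (1 : ℂ) ⊗ₖ of fun b b' : r => X (b, p) (b', p') := by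
    intro i j p p'
    ext ⟨i', b⟩ ⟨j', b'⟩
    simp [entangledEmbedding_mul_mul_conjTranspose_apply, single, kroneckerMap_apply, eq_comm]
  ext ⟨k, p⟩ ⟨l, p'⟩
  simp [conjTranspose_entangledEmbedding_mul_mul_apply, extendBy, loopComp, h_block]

theorem loop_composition_preserves_complete_positivity_general
    {s r q : Type*} [Fintype s] [DecidableEq s]
    [Fintype r] [Fintype q]
    (M : Matrix (s × r) (s × r) ℂ →ₗ[ℂ] Matrix (s × q) (s × q) ℂ)
    (hM : IsCompletelyPositive (fun X => M X)) :
    IsCompletelyPositive (loopComp (fun X => M X)) := by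
  classical
  intro n X hX
  change (extendBy (loopComp fun Y => M Y) (Fin n) X).PosSemidef
  rw [extendBy_loopComp_eq]
  exact (hM.posSemidef_extendBy (hX.mul_mul_conjTranspose_same _)).conjTranspose_mul_mul_same _

/-- Loop composition preserves complete positivity: if
`M : L(H_S' ⊗ H_R) → L(H_S ⊗ H_Q)` is a completely positive linear map with
`H_S ≅ H_S'`, then `M^{S↪S'} : L(H_R) → L(H_Q)` is completely positive. -/
theorem loop_composition_preserves_complete_positivity
    {s r q : Type*} [Fintype s] [DecidableEq s]
    [Fintype r] [DecidableEq r] [Fintype q] [DecidableEq q]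
    (M : Matrix (s × r) (s × r) ℂ →ₗ[ℂ] Matrix (s × q) (s × q) ℂ)
    (hM : IsCompletelyPositive (fun X => M X)) :
    IsCompletelyPositive (loopComp (fun X => M X)) :=
  loop_composition_preserves_complete_positivity_general M hM
end
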